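/- arXiv:2406.11365 — 2 statements merged into one kernel-verified Lean document; each statement's English description precedes it below -/
import Mathlib

section
/- Assume σ is upper (n−1)-Ahlfors regular with constant c. Then there exists a constant C > 0, depending only on n and c, such that the single layer heat potential satisfies the parabolic Hölder estimate in time |v[μ](t₁,x) − v[μ](t₂,x)| ≤ C·(sup |μ|)·|t₁ − t₂|^{1/2} for all t₁, t₂ ∈ [0,T] and all x ∈ ℝⁿ. -/
open Real MeasureTheory

/-- The fundamental solution of the heat equation in `ℝⁿ`. -/
noncomputable def Sn (n : ℕ) (t : ℝ) (x : EuclideanSpace ℝ (Fin n)) : ℝ :=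
  if 0 < t then (4 * Real.pi * t) ^ (-(n : ℝ) / 2) * Real.exp (-‖x‖ ^ 2 / (4 * t)) else 0

/-- The single layer heat potential `v[μ](t,x) = ∫₀ᵗ ∫ S_n(t−τ, x−y) μ(τ,y) dσ(y) dτ`. -/
noncomputable def singleLayer (n : ℕ) (σ : Measure (EuclideanSpace ℝ (Fin n)))
    (μ : ℝ → EuclideanSpace ℝ (Fin n) → ℝ) (t : ℝ) (x : EuclideanSpace ℝ (Fin n)) : ℝ :=
  ∫ τ in Set.Ioc (0 : ℝ) t, ∫ y, Sn n (t - τ) (x - y) * μ τ y ∂σ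

/-
Let `G(s) = ∫ Sₙ(s, x - y) g(y) dσ(y)` with `|g| ≤ M`. Writing `exp (-u) = ∫_u^∞ e^{-s} ds` and
applying Tonelli, upper `(n-1)`-regularity bounds `∫ exp (-|x - y|² / R) dσ(y)` by
`c R^{(n-1)/2} Γ((n+1)/2)`, which gives `|G(s)| ≲ c M s^{-1/2}`. Since `|∂ₛSₙ(s, ·)|` is at most
`s⁻¹` times a Gaussian of doubled variance, the same bound and the fundamental theorem of calculus
give `|G(a) - G(b)| ≲ c M (b^{-1/2} - a^{-1/2})` for `b ≤ a`. Finally `v(t₁) - v(t₂)` splits into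
the integral over `(t₂, t₁]` and the integral of the difference over `(0, t₂]`; both bounds
integrate to `O(|t₁ - t₂|^{1/2})`.
-/

open Set

def IsUpperAhlforsRegular {E : Type*} [PseudoMetricSpace E] [MeasurableSpace E] (σ : Measure E)
    (d : ℕ) (c : ℝ) : Prop :=
  ∀ (x : E) (r : ℝ), 0 < r → σ (Metric.closedBall x r) ≤ ENNReal.ofReal (c * r ^ d)

theorem ofReal_exp_neg_eq_lintegral_Ioi (u : ℝ) :
    ENNReal.ofReal (exp (-u)) = ∫⁻ s in Ioi u, ENNReal.ofReal (exp (-s)) := by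
  rw [← ofReal_integral_eq_lintegral_ofReal (integrableOn_exp_neg_Ioi u)
    (ae_of_all _ fun s => (exp_pos _).le), integral_exp_neg_Ioi]

theorem lintegral_ofReal_exp_neg_eq_lintegral_meas_lt {α : Type*} [MeasurableSpace α]
    {σ : Measure α} [SFinite σ] {φ : α → ℝ} (hφ : Measurable φ) :
    ∫⁻ y, ENNReal.ofReal (exp (-φ y)) ∂σ = ∫⁻ s, σ {y | φ y < s} * ENNReal.ofReal (exp (-s)) := by
  set S : Set (α × ℝ) := {p | φ p.1 < p.2}
  have hS : MeasurableSet S := measurableSet_lt (hφ.comp measurable_fst) measurable_snd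
  calc ∫⁻ y, ENNReal.ofReal (exp (-φ y)) ∂σ
      = ∫⁻ y, (∫⁻ s, S.indicator (fun p => ENNReal.ofReal (exp (-p.2))) (y, s)) ∂σ := by
        congr 1 with y
        rw [ofReal_exp_neg_eq_lintegral_Ioi, ← lintegral_indicator measurableSet_Ioi]
        rfl
    _ = ∫⁻ s, ∫⁻ y, S.indicator (fun p => ENNReal.ofReal (exp (-p.2))) (y, s) ∂σ :=
        lintegral_lintegral_swap
          (f := fun y s => S.indicator (fun p => ENNReal.ofReal (exp (-p.2))) (y, s))
          (measurable_snd.neg.exp.ennreal_ofReal.indicator hS).aemeasurable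
    _ = ∫⁻ s, σ {y | φ y < s} * ENNReal.ofReal (exp (-s)) := by
        congr 1 with s
        rw [mul_comm, ← lintegral_indicator_const (measurableSet_lt hφ measurable_const)]
        rfl

theorem lintegral_Ioi_mul_rpow_mul_exp_neg (K : ℝ) {p : ℝ} (hp : -1 < p) :
    ∫⁻ s in Ioi 0, ENNReal.ofReal (K * s ^ p * exp (-s)) = ENNReal.ofReal (K * Gamma (p + 1)) := by
  have hpos : 0 < p + 1 := by linarith
  calc ∫⁻ s in Ioi 0, ENNReal.ofReal (K * s ^ p * exp (-s))
      = ∫⁻ s in Ioi 0, ENNReal.ofReal K * ENNReal.ofReal (exp (-s) * s ^ (p + 1 - 1)) := by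
        refine setLIntegral_congr_fun measurableSet_Ioi fun s hs => ?_
        rw [← ENNReal.ofReal_mul' (by have := mem_Ioi.1 hs; positivity), add_sub_cancel_right]
        ring_nf
    _ = ENNReal.ofReal (K * Gamma (p + 1)) := by
        rw [lintegral_const_mul' _ _ ENNReal.ofReal_ne_top, ← ofReal_integral_eq_lintegral_ofReal
          (GammaIntegral_convergent hpos) ((ae_restrict_iff' measurableSet_Ioi).2
            (ae_of_all _ fun s hs => by have := mem_Ioi.1 hs; positivity)),
          ← Gamma_eq_integral hpos, ENNReal.ofReal_mul' (Gamma_pos_of_pos hpos).le]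

theorem lintegral_exp_neg_dist_sq_le {E : Type*} [PseudoMetricSpace E] [MeasurableSpace E]
    [OpensMeasurableSpace E] {σ : Measure E} [SFinite σ] {c : ℝ} {d : ℕ}
    (hσ : IsUpperAhlforsRegular σ d c) (x : E) {R : ℝ} (hR : 0 < R) :
    ∫⁻ y, ENNReal.ofReal (exp (-dist x y ^ 2 / R)) ∂σ ≤
      ENNReal.ofReal (c * R ^ ((d : ℝ) / 2) * Gamma (d / 2 + 1)) := by
  have hball : ∀ s : ℝ, 0 < s → σ {y | dist x y ^ 2 / R < s} ≤
      ENNReal.ofReal (c * R ^ ((d : ℝ) / 2) * s ^ ((d : ℝ) / 2)) := by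
    intro s hs
    have hsub : {y | dist x y ^ 2 / R < s} ⊆ Metric.closedBall x (√(s * R)) := by
      intro y hy
      rw [Metric.mem_closedBall, dist_comm]
      exact le_sqrt_of_sq_le ((div_lt_iff₀ hR).1 hy).le
    calc σ {y | dist x y ^ 2 / R < s} ≤ ENNReal.ofReal (c * √(s * R) ^ d) :=
          (measure_mono hsub).trans (hσ x _ (by positivity))
      _ = ENNReal.ofReal (c * R ^ ((d : ℝ) / 2) * s ^ ((d : ℝ) / 2)) := by
          rw [sqrt_eq_rpow, ← rpow_natCast, ← rpow_mul (by positivity), mul_rpow hs.le hR.le]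
          ring_nf
  simp_rw [neg_div]
  rw [lintegral_ofReal_exp_neg_eq_lintegral_meas_lt (by fun_prop),
    ← lintegral_Ioi_mul_rpow_mul_exp_neg _ (by linarith [show (0 : ℝ) ≤ d / 2 by positivity]),
    ← lintegral_indicator measurableSet_Ioi]
  refine lintegral_mono fun s => ?_
  rcases le_or_gt s 0 with hs | hs
  · have : {y | dist x y ^ 2 / R < s} = ∅ :=
      eq_empty_of_forall_notMem fun y hy => (hy.trans_le hs).not_ge (by positivity)
    simp [this]
  · rw [indicator_of_mem (mem_Ioi.2 hs), ENNReal.ofReal_mul' (exp_pos _).le]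
    exact mul_le_mul_left (hball s hs) _

theorem abs_integral_le_of_enorm_le {α : Type*} [MeasurableSpace α] {μ : Measure α} {f : α → ℝ}
    {H : α → ENNReal} {M B : ℝ} (hM : 0 ≤ M) (hB : 0 ≤ B)
    (hf : ∀ y, ‖f y‖ₑ ≤ ENNReal.ofReal M * H y) (hH : ∫⁻ y, H y ∂μ ≤ ENNReal.ofReal B) :
    |∫ y, f y ∂μ| ≤ M * B := by
  have : ‖∫ y, f y ∂μ‖ₑ ≤ ENNReal.ofReal (M * B) :=
    calc ‖∫ y, f y ∂μ‖ₑ ≤ ∫⁻ y, ‖f y‖ₑ ∂μ := enorm_integral_le_lintegral_enorm f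
      _ ≤ ∫⁻ y, ENNReal.ofReal M * H y ∂μ := lintegral_mono hf
      _ ≤ ENNReal.ofReal M * ENNReal.ofReal B := by
          rw [lintegral_const_mul' _ _ ENNReal.ofReal_ne_top]
          gcongr
      _ = ENNReal.ofReal (M * B) := (ENNReal.ofReal_mul hM).symm
  rwa [Real.enorm_eq_ofReal_abs, ENNReal.ofReal_le_ofReal_iff (by positivity)] at this

theorem lintegral_Ioc_mul_rpow_neg_three_halves {K a b : ℝ} (hK : 0 ≤ K) (hb : 0 < b)
    (hba : b ≤ a) :
    ∫⁻ r in Ioc b a, ENNReal.ofReal (K * r ^ (-(3 / 2 : ℝ))) =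
      ENNReal.ofReal (2 * K * (b ^ (-(1 / 2 : ℝ)) - a ^ (-(1 / 2 : ℝ)))) := by
  have h0 : (0 : ℝ) ∉ uIcc b a := notMem_uIcc_of_lt hb (hb.trans_le hba)
  rw [← ofReal_integral_eq_lintegral_ofReal
    (((intervalIntegral.intervalIntegrable_rpow (Or.inr h0)).1).const_mul _)
    ((ae_restrict_iff' measurableSet_Ioc).2 (ae_of_all _ fun r hr => by
      have := hb.trans hr.1; positivity)),
    integral_const_mul, ← intervalIntegral.integral_of_le hba,
    integral_rpow (Or.inr ⟨by norm_num, h0⟩)]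
  congr 1
  norm_num
  ring

theorem integrableOn_Ioc_sub_rpow {r : ℝ} (hr : -1 < r) (t : ℝ) {u w : ℝ} (huw : u ≤ w) :
    IntegrableOn (fun τ => (t - τ) ^ r) (Ioc u w) := by
  rw [← intervalIntegrable_iff_integrableOn_Ioc_of_le huw]
  simpa using
    (intervalIntegral.intervalIntegrable_rpow' hr (a := t - u) (b := t - w)).comp_sub_left t

theorem integral_Ioc_sub_rpow_neg_half {t u w : ℝ} (huw : u ≤ w) :
    ∫ τ in Ioc u w, (t - τ) ^ (-(1 / 2 : ℝ)) =
      2 * ((t - u) ^ (1 / 2 : ℝ) - (t - w) ^ (1 / 2 : ℝ)) := by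
  rw [← intervalIntegral.integral_of_le huw,
    intervalIntegral.integral_comp_sub_left (fun s => s ^ (-(1 / 2 : ℝ))),
    integral_rpow (Or.inl (by norm_num))]
  norm_num
  ring

theorem abs_setIntegral_Ioc_sub_le {G : ℝ → ℝ → ℝ} {A B a t₁ t₂ : ℝ}
    (hG : ∀ t, AEStronglyMeasurable (G t))
    (hbound : ∀ t τ, τ < t → |G t τ| ≤ A * (t - τ) ^ (-(1 / 2 : ℝ)))
    (hB : 0 ≤ B)
    (hdiff : ∀ τ, τ < t₂ →
      |G t₁ τ - G t₂ τ| ≤ B * ((t₂ - τ) ^ (-(1 / 2 : ℝ)) - (t₁ - τ) ^ (-(1 / 2 : ℝ))))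
    (ha : a ≤ t₂) (h21 : t₂ ≤ t₁) :
    |(∫ τ in Ioc a t₁, G t₁ τ) - ∫ τ in Ioc a t₂, G t₂ τ| ≤
      2 * (A + B) * (t₁ - t₂) ^ (1 / 2 : ℝ) := by
  have hIoo : ∀ u w : ℝ, ∀ᵐ τ ∂volume.restrict (Ioc u w), τ ∈ Ioo u w := fun u w => by
    rw [← Measure.restrict_congr_set Ioo_ae_eq_Ioc]
    exact ae_restrict_mem measurableSet_Ioo
  have hsing : ∀ {t u w : ℝ}, u ≤ w → IntegrableOn (fun τ => (t - τ) ^ (-(1 / 2 : ℝ))) (Ioc u w) :=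
    integrableOn_Ioc_sub_rpow (by norm_num) _
  have hint : ∀ {t u w : ℝ}, u ≤ w → w ≤ t → IntegrableOn (G t) (Ioc u w) := fun huw hwt =>
    ((hsing huw).const_mul A).mono' (hG _).restrict <| by
      filter_upwards [hIoo _ _] with τ hτ using hbound _ _ (hτ.2.trans_le hwt)
  have hsplit : (∫ τ in Ioc a t₁, G t₁ τ) - ∫ τ in Ioc a t₂, G t₂ τ =
      (∫ τ in Ioc t₂ t₁, G t₁ τ) + ∫ τ in Ioc a t₂, (G t₁ τ - G t₂ τ) := by
    rw [← Ioc_union_Ioc_eq_Ioc ha h21, setIntegral_union (f := G t₁)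
      (Ioc_disjoint_Ioc_of_le le_rfl) measurableSet_Ioc (hint ha h21) (hint h21 le_rfl),
      integral_sub (hint ha h21) (hint ha le_rfl)]
    ring
  have hnear : |∫ τ in Ioc t₂ t₁, G t₁ τ| ≤ 2 * A * (t₁ - t₂) ^ (1 / 2 : ℝ) :=
    calc |∫ τ in Ioc t₂ t₁, G t₁ τ| ≤ ∫ τ in Ioc t₂ t₁, A * (t₁ - τ) ^ (-(1 / 2 : ℝ)) :=
          norm_integral_le_of_norm_le ((hsing h21).const_mul A) <| by
            filter_upwards [hIoo _ _] with τ hτ using (norm_eq_abs _).trans_le (hbound _ _ hτ.2)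
      _ = 2 * A * (t₁ - t₂) ^ (1 / 2 : ℝ) := by
          rw [integral_const_mul, integral_Ioc_sub_rpow_neg_half h21, sub_self,
            zero_rpow (by norm_num)]
          ring
  have hfar : |∫ τ in Ioc a t₂, (G t₁ τ - G t₂ τ)| ≤ 2 * B * (t₁ - t₂) ^ (1 / 2 : ℝ) :=
    calc |∫ τ in Ioc a t₂, (G t₁ τ - G t₂ τ)|
        ≤ ∫ τ in Ioc a t₂, B * ((t₂ - τ) ^ (-(1 / 2 : ℝ)) - (t₁ - τ) ^ (-(1 / 2 : ℝ))) :=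
          norm_integral_le_of_norm_le (((hsing ha).sub (hsing ha)).const_mul B) <| by
            filter_upwards [hIoo _ _] with τ hτ using (norm_eq_abs _).trans_le (hdiff _ hτ.2)
      _ = 2 * B * ((t₂ - a) ^ (1 / 2 : ℝ) - (t₁ - a) ^ (1 / 2 : ℝ) + (t₁ - t₂) ^ (1 / 2 : ℝ)) := by
          rw [integral_const_mul, integral_sub (hsing ha) (hsing ha),
            integral_Ioc_sub_rpow_neg_half ha, integral_Ioc_sub_rpow_neg_half ha, sub_self,
            zero_rpow (by norm_num)]
          ring
      _ ≤ 2 * B * (t₁ - t₂) ^ (1 / 2 : ℝ) := by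
          have : (t₂ - a) ^ (1 / 2 : ℝ) ≤ (t₁ - a) ^ (1 / 2 : ℝ) := by gcongr
          nlinarith
  calc _ ≤ |∫ τ in Ioc t₂ t₁, G t₁ τ| + |∫ τ in Ioc a t₂, (G t₁ τ - G t₂ τ)| :=
        hsplit ▸ abs_add_le _ _
    _ ≤ 2 * (A + B) * (t₁ - t₂) ^ (1 / 2 : ℝ) := by linarith

noncomputable def SnDeriv (n : ℕ) (t : ℝ) (x : EuclideanSpace ℝ (Fin n)) : ℝ :=
  Sn n t x * (‖x‖ ^ 2 / (4 * t ^ 2) - n / (2 * t))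

noncomputable def widenedSn (n : ℕ) (t : ℝ) (x : EuclideanSpace ℝ (Fin n)) : ℝ :=
  (4 * π * t) ^ (-(n : ℝ) / 2) * exp (-‖x‖ ^ 2 / (8 * t))

section HeatKernel

variable {n : ℕ} {t : ℝ}

theorem Sn_of_pos (ht : 0 < t) (x : EuclideanSpace ℝ (Fin n)) :
    Sn n t x = (4 * π * t) ^ (-(n : ℝ) / 2) * exp (-‖x‖ ^ 2 / (4 * t)) :=
  if_pos ht

theorem Sn_nonneg (t : ℝ) (x : EuclideanSpace ℝ (Fin n)) : 0 ≤ Sn n t x := by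
  unfold Sn; split_ifs <;> positivity

theorem measurable_Sn (n : ℕ) : Measurable fun p : ℝ × EuclideanSpace ℝ (Fin n) => Sn n p.1 p.2 :=
  Measurable.ite (measurableSet_lt measurable_const measurable_fst) (by fun_prop) measurable_const

theorem measurable_SnDeriv (n : ℕ) :
    Measurable fun p : ℝ × EuclideanSpace ℝ (Fin n) => SnDeriv n p.1 p.2 :=
  (measurable_Sn n).mul (by fun_prop)

theorem Sn_le_widenedSn (ht : 0 < t) (x : EuclideanSpace ℝ (Fin n)) :
    Sn n t x ≤ widenedSn n t x := by
  rw [Sn_of_pos ht, widenedSn]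
  gcongr _ * exp ?_
  rw [neg_div, neg_div, neg_le_neg_iff]
  gcongr
  linarith

theorem hasDerivAt_Sn (ht : 0 < t) (x : EuclideanSpace ℝ (Fin n)) :
    HasDerivAt (fun s => Sn n s x) (SnDeriv n t x) t := by
  have hexp : ∀ s > 0, Sn n s x = exp (log (4 * π * s) * (-(n : ℝ) / 2) - ‖x‖ ^ 2 / 4 * s⁻¹) := by
    intro s hs
    rw [Sn_of_pos hs, rpow_def_of_pos (by positivity), sub_eq_add_neg, exp_add]
    ring_nf
  have hderiv := ((((hasDerivAt_id t).const_mul (4 * π)).log (by positivity)).mul_const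
    (-(n : ℝ) / 2)).sub ((hasDerivAt_inv ht.ne').const_mul (‖x‖ ^ 2 / 4)) |>.exp
  refine (hderiv.congr_deriv ?_).congr_of_eventuallyEq ((eventually_gt_nhds ht).mono hexp)
  simp only [Pi.sub_apply, id, SnDeriv, hexp t ht]
  congr 1
  field_simp
  ring

theorem abs_SnDeriv_le (ht : 0 < t) (x : EuclideanSpace ℝ (Fin n)) :
    |SnDeriv n t x| ≤ (n / 2 + 2) / t * widenedSn n t x := by
  set u := ‖x‖ ^ 2 / (4 * t) with hu_def
  have hu : 0 ≤ u := by positivity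
  -- `exp (u / 2) ≥ 1 + u / 2` absorbs the polynomial factor into half of the Gaussian decay
  have hpoly : |u - n / 2| ≤ (n / 2 + 2) * exp (u / 2) := by
    have hn : (0 : ℝ) ≤ n / 2 := by positivity
    have := mul_le_mul_of_nonneg_left (add_one_le_exp (u / 2)) (by positivity : (0 : ℝ) ≤ n / 2 + 2)
    rw [abs_le]
    constructor <;> nlinarith
  have hform : SnDeriv n t x = (4 * π * t) ^ (-(n : ℝ) / 2) * exp (-u) * (u - n / 2) / t := by
    rw [SnDeriv, Sn_of_pos ht, hu_def, neg_div]
    field_simp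
  have hexp : exp (-u) * exp (u / 2) = exp (-‖x‖ ^ 2 / (8 * t)) := by
    rw [← exp_add, hu_def]
    congr 1
    field_simp
    ring
  rw [hform, abs_div, abs_mul, abs_of_pos ht, abs_of_pos (by positivity), widenedSn]
  calc (4 * π * t) ^ (-(n : ℝ) / 2) * exp (-u) * |u - n / 2| / t
      ≤ (4 * π * t) ^ (-(n : ℝ) / 2) * exp (-u) * ((n / 2 + 2) * exp (u / 2)) / t := by
        gcongr
    _ = (n / 2 + 2) / t * ((4 * π * t) ^ (-(n : ℝ) / 2) * exp (-‖x‖ ^ 2 / (8 * t))) := by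
        rw [← hexp]
        ring

theorem enorm_Sn_sub_le_lintegral {a b : ℝ} (hb : 0 < b) (hba : b ≤ a)
    (z : EuclideanSpace ℝ (Fin n)) :
    ‖Sn n a z - Sn n b z‖ₑ ≤ ∫⁻ r in Ioc b a, ‖SnDeriv n r z‖ₑ := by
  have hpos : ∀ r ∈ uIcc b a, 0 < r := fun r hr => hb.trans_le (by simpa [hba] using hr.1)
  have hcont : ContinuousOn (fun r => SnDeriv n r z) (uIcc b a) := fun r hr =>
    ((hasDerivAt_Sn (hpos r hr) z).continuousAt.mul (by
      have := (hpos r hr).ne'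
      fun_prop (disch := positivity))).continuousWithinAt
  rw [← intervalIntegral.integral_eq_sub_of_hasDerivAt (fun r hr => hasDerivAt_Sn (hpos r hr) z)
    hcont.intervalIntegrable, intervalIntegral.integral_of_le hba]
  exact enorm_integral_le_lintegral_enorm _

end HeatKernel

noncomputable def heatConst (n : ℕ) : ℝ :=
  (4 * π) ^ (-(n : ℝ) / 2) * 8 ^ (((n : ℝ) - 1) / 2) * Gamma (((n : ℝ) - 1) / 2 + 1)

theorem heatConst_pos {n : ℕ} (hn : 1 ≤ n) : 0 < heatConst n := by
  have : (1 : ℝ) ≤ n := by exact_mod_cast hn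
  unfold heatConst
  have := Gamma_pos_of_pos (s := ((n : ℝ) - 1) / 2 + 1) (by linarith)
  positivity

section Spatial

variable {n : ℕ} {σ : Measure (EuclideanSpace ℝ (Fin n))} [SFinite σ] {c M t : ℝ}
  {g : EuclideanSpace ℝ (Fin n) → ℝ}

theorem lintegral_widenedSn_le (hn : 1 ≤ n) (hσ : IsUpperAhlforsRegular σ (n - 1) c) (ht : 0 < t)
    (x : EuclideanSpace ℝ (Fin n)) :
    ∫⁻ y, ENNReal.ofReal (widenedSn n t (x - y)) ∂σ ≤
      ENNReal.ofReal (heatConst n * c * t ^ (-(1 / 2 : ℝ))) := by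
  have hP : 0 ≤ (4 * π * t) ^ (-(n : ℝ) / 2) := by positivity
  have hd : (((n - 1 : ℕ) : ℝ)) = n - 1 := by rw [Nat.cast_sub hn, Nat.cast_one]
  calc ∫⁻ y, ENNReal.ofReal (widenedSn n t (x - y)) ∂σ
      = ENNReal.ofReal ((4 * π * t) ^ (-(n : ℝ) / 2)) *
          ∫⁻ y, ENNReal.ofReal (exp (-dist x y ^ 2 / (8 * t))) ∂σ := by
        simp_rw [widenedSn, ENNReal.ofReal_mul hP, dist_eq_norm]
        exact lintegral_const_mul' _ _ ENNReal.ofReal_ne_top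
    _ ≤ ENNReal.ofReal ((4 * π * t) ^ (-(n : ℝ) / 2)) * ENNReal.ofReal
          (c * (8 * t) ^ (((n - 1 : ℕ) : ℝ) / 2) * Gamma (((n - 1 : ℕ) : ℝ) / 2 + 1)) := by
        gcongr
        exact lintegral_exp_neg_dist_sq_le hσ x (by positivity)
    _ = ENNReal.ofReal (heatConst n * c * t ^ (-(1 / 2 : ℝ))) := by
        rw [← ENNReal.ofReal_mul hP, hd, heatConst, mul_rpow (by positivity) ht.le,
          mul_rpow (by positivity) ht.le]
        congr 1
        rw [show t ^ (-(1 / 2 : ℝ)) = t ^ (-(n : ℝ) / 2) * t ^ (((n : ℝ) - 1) / 2) by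
          rw [← rpow_add ht]; ring_nf]
        ring

theorem enorm_Sn_mul_le (ht : 0 < t) (z : EuclideanSpace ℝ (Fin n)) {w : ℝ} (hw : |w| ≤ M) :
    ‖Sn n t z * w‖ₑ ≤ ENNReal.ofReal M * ENNReal.ofReal (widenedSn n t z) := by
  rw [Real.enorm_eq_ofReal_abs, ← ENNReal.ofReal_mul ((abs_nonneg w).trans hw), abs_mul,
    abs_of_nonneg (Sn_nonneg t z), mul_comm]
  exact ENNReal.ofReal_le_ofReal (mul_le_mul hw (Sn_le_widenedSn ht z) (Sn_nonneg t z)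
    ((abs_nonneg w).trans hw))

theorem integrable_Sn_mul (hn : 1 ≤ n)
    (hσ : IsUpperAhlforsRegular σ (n - 1) c)
    (hgm : Measurable g) (hg : ∀ y, |g y| ≤ M) (ht : 0 < t) (x : EuclideanSpace ℝ (Fin n)) :
    Integrable (fun y => Sn n t (x - y) * g y) σ := by
  refine ⟨((measurable_Sn n).comp (f := fun y => (t, x - y)) (by fun_prop)).mul hgm
    |>.aestronglyMeasurable, ?_⟩
  calc ∫⁻ y, ‖Sn n t (x - y) * g y‖ₑ ∂σ
      ≤ ∫⁻ y, ENNReal.ofReal M * ENNReal.ofReal (widenedSn n t (x - y)) ∂σ :=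
        lintegral_mono fun y => enorm_Sn_mul_le ht _ (hg y)
    _ ≤ ENNReal.ofReal M * ENNReal.ofReal (heatConst n * c * t ^ (-(1 / 2 : ℝ))) := by
        rw [lintegral_const_mul' _ _ ENNReal.ofReal_ne_top]
        gcongr
        exact lintegral_widenedSn_le hn hσ ht x
    _ < ⊤ := ENNReal.mul_lt_top ENNReal.ofReal_lt_top ENNReal.ofReal_lt_top

theorem abs_integral_Sn_mul_le (hn : 1 ≤ n) (hc : 0 ≤ c)
    (hσ : IsUpperAhlforsRegular σ (n - 1) c)
    (hg : ∀ y, |g y| ≤ M) (ht : 0 < t) (x : EuclideanSpace ℝ (Fin n)) :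
    |∫ y, Sn n t (x - y) * g y ∂σ| ≤ heatConst n * c * M * t ^ (-(1 / 2 : ℝ)) := by
  have hM : 0 ≤ M := (abs_nonneg _).trans (hg 0)
  have := heatConst_pos hn
  calc |∫ y, Sn n t (x - y) * g y ∂σ| ≤ M * (heatConst n * c * t ^ (-(1 / 2 : ℝ))) :=
        abs_integral_le_of_enorm_le hM (by positivity) (fun y => enorm_Sn_mul_le ht _ (hg y))
          (lintegral_widenedSn_le hn hσ ht x)
    _ = heatConst n * c * M * t ^ (-(1 / 2 : ℝ)) := by ring

theorem lintegral_enorm_SnDeriv_le (hn : 1 ≤ n)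
    (hσ : IsUpperAhlforsRegular σ (n - 1) c)
    (ht : 0 < t) (x : EuclideanSpace ℝ (Fin n)) :
    ∫⁻ y, ‖SnDeriv n t (x - y)‖ₑ ∂σ ≤
      ENNReal.ofReal ((n / 2 + 2) * heatConst n * c * t ^ (-(3 / 2 : ℝ))) := by
  calc ∫⁻ y, ‖SnDeriv n t (x - y)‖ₑ ∂σ
      ≤ ∫⁻ y, ENNReal.ofReal ((n / 2 + 2) / t) * ENNReal.ofReal (widenedSn n t (x - y)) ∂σ := by
        refine lintegral_mono fun y => ?_
        rw [Real.enorm_eq_ofReal_abs, ← ENNReal.ofReal_mul (by positivity)]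
        exact ENNReal.ofReal_le_ofReal (abs_SnDeriv_le ht _)
    _ ≤ ENNReal.ofReal ((n / 2 + 2) / t) *
          ENNReal.ofReal (heatConst n * c * t ^ (-(1 / 2 : ℝ))) := by
        rw [lintegral_const_mul' _ _ ENNReal.ofReal_ne_top]
        gcongr
        exact lintegral_widenedSn_le hn hσ ht x
    _ = ENNReal.ofReal ((n / 2 + 2) * heatConst n * c * t ^ (-(3 / 2 : ℝ))) := by
        rw [← ENNReal.ofReal_mul (by positivity)]
        congr 1
        rw [show t ^ (-(3 / 2 : ℝ)) = t ^ (-(1 / 2 : ℝ)) / t by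
          rw [← rpow_sub_one ht.ne']; norm_num]
        ring

theorem lintegral_lintegral_Ioc_enorm_SnDeriv_le (hn : 1 ≤ n) (hc : 0 ≤ c)
    (hσ : IsUpperAhlforsRegular σ (n - 1) c) {a b : ℝ} (hb : 0 < b) (hba : b ≤ a)
    (x : EuclideanSpace ℝ (Fin n)) :
    ∫⁻ y, (∫⁻ r in Ioc b a, ‖SnDeriv n r (x - y)‖ₑ) ∂σ ≤
      ENNReal.ofReal ((n + 4) * heatConst n * c * (b ^ (-(1 / 2 : ℝ)) - a ^ (-(1 / 2 : ℝ)))) := by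
  have := heatConst_pos hn
  calc ∫⁻ y, (∫⁻ r in Ioc b a, ‖SnDeriv n r (x - y)‖ₑ) ∂σ
      = ∫⁻ r in Ioc b a, ∫⁻ y, ‖SnDeriv n r (x - y)‖ₑ ∂σ :=
        lintegral_lintegral_swap ((measurable_SnDeriv n).comp
          (measurable_snd.prodMk (measurable_const.sub measurable_fst))).enorm.aemeasurable
    _ ≤ ∫⁻ r in Ioc b a, ENNReal.ofReal ((n / 2 + 2) * heatConst n * c * r ^ (-(3 / 2 : ℝ))) :=
        setLIntegral_mono' measurableSet_Ioc fun r hr =>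
          lintegral_enorm_SnDeriv_le hn hσ (hb.trans hr.1) x
    _ = ENNReal.ofReal ((n + 4) * heatConst n * c * (b ^ (-(1 / 2 : ℝ)) - a ^ (-(1 / 2 : ℝ)))) := by
        rw [lintegral_Ioc_mul_rpow_neg_three_halves (by positivity) hb hba]
        congr 1
        ring

theorem abs_integral_Sn_sub_le (hn : 1 ≤ n) (hc : 0 ≤ c)
    (hσ : IsUpperAhlforsRegular σ (n - 1) c)
    (hgm : Measurable g) (hg : ∀ y, |g y| ≤ M) {a b : ℝ} (hb : 0 < b) (hba : b ≤ a)
    (x : EuclideanSpace ℝ (Fin n)) :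
    |∫ y, Sn n a (x - y) * g y ∂σ - ∫ y, Sn n b (x - y) * g y ∂σ| ≤
      (n + 4) * heatConst n * c * M * (b ^ (-(1 / 2 : ℝ)) - a ^ (-(1 / 2 : ℝ))) := by
  have hM : 0 ≤ M := (abs_nonneg _).trans (hg 0)
  have := heatConst_pos hn
  have hgap : 0 ≤ b ^ (-(1 / 2 : ℝ)) - a ^ (-(1 / 2 : ℝ)) :=
    sub_nonneg.2 (rpow_le_rpow_of_nonpos hb hba (by norm_num))
  rw [← integral_sub (integrable_Sn_mul hn hσ hgm hg (hb.trans_le hba) x)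
    (integrable_Sn_mul hn hσ hgm hg hb x)]
  calc _ ≤ M * ((n + 4) * heatConst n * c * (b ^ (-(1 / 2 : ℝ)) - a ^ (-(1 / 2 : ℝ)))) := by
        refine abs_integral_le_of_enorm_le hM (by positivity) (fun y => ?_)
          (lintegral_lintegral_Ioc_enorm_SnDeriv_le hn hc hσ hb hba x)
        rw [← sub_mul, enorm_mul, mul_comm, Real.enorm_eq_ofReal_abs (g y)]
        exact mul_le_mul' (ENNReal.ofReal_le_ofReal (hg y)) (enorm_Sn_sub_le_lintegral hb hba _)
    _ = (n + 4) * heatConst n * c * M * (b ^ (-(1 / 2 : ℝ)) - a ^ (-(1 / 2 : ℝ))) := by ring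

end Spatial

/-- If `σ` is upper `(n−1)`-Ahlfors regular with constant `c`, then there is a constant `C > 0`,
depending only on `n` and `c`, such that the single layer heat potential is `1/2`-Hölder
continuous in time, with constant `C · sup|μ|`. -/
theorem singleLayer_holder_time (n : ℕ) (hn : 2 ≤ n) (c : ℝ) (hc : 0 < c) :
    ∃ C : ℝ, 0 < C ∧
      ∀ T : ℝ, 0 < T →
      ∀ σ : Measure (EuclideanSpace ℝ (Fin n)), IsFiniteMeasure σ →
      ∀ K : Set (EuclideanSpace ℝ (Fin n)), IsCompact K →
        K = {x | ∀ U : Set (EuclideanSpace ℝ (Fin n)), IsOpen U → x ∈ U → σ U ≠ 0} →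
      (∀ (x : EuclideanSpace ℝ (Fin n)) (r : ℝ), 0 < r →
        σ (Metric.closedBall x r) ≤ ENNReal.ofReal (c * r ^ (n - 1))) →
      ∀ μ : ℝ → EuclideanSpace ℝ (Fin n) → ℝ, Measurable (Function.uncurry μ) →
      ∀ M : ℝ, (∀ t x, |μ t x| ≤ M) →
      ∀ t₁ ∈ Set.Icc (0 : ℝ) T, ∀ t₂ ∈ Set.Icc (0 : ℝ) T,
      ∀ x : EuclideanSpace ℝ (Fin n),
        |singleLayer n σ μ t₁ x - singleLayer n σ μ t₂ x| ≤
          C * M * |t₁ - t₂| ^ ((1 : ℝ) / 2) := by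
  have hn₁ : 1 ≤ n := by omega
  refine ⟨2 * (n + 5) * heatConst n * c, by have := heatConst_pos hn₁; positivity, ?_⟩
  intro T _ σ _ K _ _ hσ μ hμ M hμM t₁ ht₁ t₂ ht₂ x
  wlog h21 : t₂ ≤ t₁ generalizing t₁ t₂
  · rw [abs_sub_comm, abs_sub_comm t₁]
    exact this t₂ ht₂ t₁ ht₁ (le_of_not_ge h21)
  set G : ℝ → ℝ → ℝ := fun t τ => ∫ y, Sn n (t - τ) (x - y) * μ τ y ∂σ
  have hG : ∀ t, AEStronglyMeasurable (G t) := fun t =>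
    (StronglyMeasurable.integral_prod_right (f := fun τ y => Sn n (t - τ) (x - y) * μ τ y)
      ((measurable_Sn n).comp (f := fun p : ℝ × _ => (t - p.1, x - p.2)) (by fun_prop)
        |>.mul hμ).stronglyMeasurable).aestronglyMeasurable
  have hM : 0 ≤ M := (abs_nonneg _).trans (hμM 0 0)
  have := heatConst_pos hn₁
  have key := abs_setIntegral_Ioc_sub_le hG
    (fun t τ hτ => abs_integral_Sn_mul_le hn₁ hc.le hσ (hμM τ) (sub_pos.2 hτ) x)
    (by positivity)
    (fun τ hτ => abs_integral_Sn_sub_le hn₁ hc.le hσ hμ.of_uncurry_left (hμM τ) (sub_pos.2 hτ)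
      (by linarith) x) ht₂.1 h21
  rw [abs_of_nonneg (sub_nonneg.2 h21)]
  exact key.trans_eq (by ring)
end

section
/- Assume σ is upper (n−1)-Ahlfors regular with constant c. Then there exists a constant C > 0, depending only on n and c, such that ∫_{ℝⁿ} S_n(s, x−y) dσ(y) ≤ C·s^{−1/2} for every s > 0 and every x ∈ ℝⁿ. -/
open Real MeasureTheory

/-!
Cut space into the shells `k√s ≤ ‖x - y‖ < (k + 1)√s` around `x`. On the `k`-th shell the Gaussian
`exp (-‖x - y‖² / 4s)` is at most `exp (-k² / 4)`, and by Ahlfors regularity the shell has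
`σ`-mass at most `c ((k + 1)√s)^(n-1)`. Summing, the integral is at most
`(4πs)^(-n/2) · c · s^((n-1)/2) · ∑ₖ (k + 1)^(n-1) exp (-k² / 4)`; the series converges and
the powers of `s` combine to `s^(-1/2)`.
-/

open Metric
open scoped ENNReal

noncomputable def gaussianShellSum (d : ℕ) : ℝ :=
  ∑' k : ℕ, ((k : ℝ) + 1) ^ d * exp (-(k : ℝ) ^ 2 / 4)

theorem summable_gaussianShellSum (d : ℕ) :
    Summable fun k : ℕ => ((k : ℝ) + 1) ^ d * exp (-(k : ℝ) ^ 2 / 4) := by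
  -- `k ≤ k²` gives `exp (-k² / 4) ≤ exp (1 / 4) · exp (-(k + 1) / 4)`
  have h := (summable_nat_add_iff 1).mpr
    (summable_pow_mul_exp_neg_nat_mul d (r := 1 / 4) (by norm_num))
  refine (h.mul_left (exp (1 / 4))).of_nonneg_of_le (fun _ => by positivity) fun k => ?_
  have hk : (k : ℝ) ≤ (k : ℝ) ^ 2 := by exact_mod_cast Nat.le_self_pow two_ne_zero k
  push_cast
  rw [mul_left_comm, ← exp_add]
  gcongr
  linarith

theorem gaussianShellSum_pos (d : ℕ) : 0 < gaussianShellSum d :=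
  (summable_gaussianShellSum d).tsum_pos (fun _ => by positivity) 0 (by positivity)

section Shells

variable {X : Type*} [PseudoMetricSpace X] [MeasurableSpace X] [OpensMeasurableSpace X]

theorem lintegral_le_tsum_mul_measure_closedBall (μ : Measure X) (x : X) {t : ℝ} (ht : 0 < t)
    {f : ℝ → ℝ≥0∞} (hf : AntitoneOn f (Set.Ici 0)) :
    ∫⁻ y, f (dist y x) ∂μ ≤ ∑' k : ℕ, f (k * t) * μ (closedBall x ((k + 1) * t)) := by
  calc ∫⁻ y, f (dist y x) ∂μ
      ≤ ∫⁻ y, ∑' k : ℕ, (closedBall x ((k + 1) * t)).indicator (fun _ => f (k * t)) y ∂μ := by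
        refine lintegral_mono fun y => ?_
        set k := ⌊dist y x / t⌋₊
        have hlow : (k : ℝ) * t ≤ dist y x :=
          (le_div_iff₀ ht).mp (Nat.floor_le (div_nonneg dist_nonneg ht.le))
        have hup : dist y x ≤ (k + 1) * t :=
          ((div_lt_iff₀ ht).mp (Nat.lt_floor_add_one _)).le
        refine le_trans ?_ (ENNReal.le_tsum k)
        rw [Set.indicator_of_mem (mem_closedBall.mpr hup)]
        exact hf (Set.mem_Ici.mpr (by positivity)) (Set.mem_Ici.mpr dist_nonneg) hlow
    _ = ∑' k : ℕ, f (k * t) * μ (closedBall x ((k + 1) * t)) := by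
        rw [lintegral_tsum fun k =>
          (measurable_const.indicator measurableSet_closedBall).aemeasurable]
        simp_rw [lintegral_indicator_const measurableSet_closedBall]

variable {μ : Measure X} {c : ℝ} {d : ℕ}

theorem lintegral_exp_neg_dist_sq_le_s10 (hc : 0 ≤ c)
    (hμ : ∀ (x : X) (r : ℝ), 0 < r → μ (closedBall x r) ≤ ENNReal.ofReal (c * r ^ d))
    (x : X) {s : ℝ} (hs : 0 < s) :
    ∫⁻ y, ENNReal.ofReal (exp (-dist y x ^ 2 / (4 * s))) ∂μ ≤
      ENNReal.ofReal (c * √s ^ d * gaussianShellSum d) := by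
  have hts : 0 < √s := sqrt_pos.mpr hs
  have hanti : AntitoneOn (fun r : ℝ => ENNReal.ofReal (exp (-r ^ 2 / (4 * s)))) (Set.Ici 0) :=
    fun a ha b _ hab => ENNReal.ofReal_le_ofReal <| exp_le_exp.mpr <| by gcongr
  have hweight (k : ℕ) : exp (-((k : ℝ) * √s) ^ 2 / (4 * s)) = exp (-(k : ℝ) ^ 2 / 4) := by
    rw [mul_pow, sq_sqrt hs.le]
    field_simp
  calc ∫⁻ y, ENNReal.ofReal (exp (-dist y x ^ 2 / (4 * s))) ∂μ
      ≤ ∑' k : ℕ, ENNReal.ofReal (exp (-(k : ℝ) ^ 2 / 4)) *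
          ENNReal.ofReal (c * (((k : ℝ) + 1) * √s) ^ d) := by
        refine (lintegral_le_tsum_mul_measure_closedBall μ x hts hanti).trans
          (ENNReal.tsum_le_tsum fun k => ?_)
        rw [hweight]
        gcongr
        exact hμ x _ (by positivity)
    _ = ∑' k : ℕ, ENNReal.ofReal
          (c * √s ^ d * (((k : ℝ) + 1) ^ d * exp (-(k : ℝ) ^ 2 / 4))) := by
        congr 1 with k
        rw [← ENNReal.ofReal_mul (by positivity), mul_pow]
        congr 1
        ring
    _ = ENNReal.ofReal (c * √s ^ d * gaussianShellSum d) := by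
        rw [← ENNReal.ofReal_tsum_of_nonneg (fun k => by positivity)
          ((summable_gaussianShellSum d).mul_left _), tsum_mul_left, gaussianShellSum]

theorem integral_exp_neg_dist_sq_le (hc : 0 ≤ c)
    (hμ : ∀ (x : X) (r : ℝ), 0 < r → μ (closedBall x r) ≤ ENNReal.ofReal (c * r ^ d))
    (x : X) {s : ℝ} (hs : 0 < s) :
    ∫ y, exp (-dist y x ^ 2 / (4 * s)) ∂μ ≤ c * √s ^ d * gaussianShellSum d := by
  rw [integral_eq_lintegral_of_nonneg_ae (.of_forall fun _ => (exp_pos _).le)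
    (by fun_prop : Continuous fun y => exp (-dist y x ^ 2 / (4 * s))).aestronglyMeasurable]
  exact ENNReal.toReal_le_of_le_ofReal (by positivity [gaussianShellSum_pos d])
    (lintegral_exp_neg_dist_sq_le_s10 hc hμ x hs)

end Shells

theorem rpow_neg_div_two_mul_sqrt_pow_pred {s : ℝ} (hs : 0 < s) {n : ℕ} (hn : 1 ≤ n) :
    s ^ (-(n : ℝ) / 2) * √s ^ (n - 1) = s ^ (-(1 : ℝ) / 2) := by
  rw [sqrt_eq_rpow, ← rpow_natCast, ← rpow_mul hs.le, ← rpow_add hs]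
  push_cast [Nat.cast_sub hn]
  ring_nf

/-- If the finite Borel measure `σ` is upper `(n−1)`-Ahlfors regular with constant `c`, then
there is a constant `C > 0`, depending only on `n` and `c`, such that
`∫ S_n(s, x−y) dσ(y) ≤ C·s^{−1/2}` for all `s > 0` and `x ∈ ℝⁿ`. -/
theorem integral_Sn_le (n : ℕ) (hn : 2 ≤ n) (c : ℝ) (hc : 0 < c) :
    ∃ C : ℝ, 0 < C ∧
      ∀ σ : Measure (EuclideanSpace ℝ (Fin n)), IsFiniteMeasure σ →
      (∀ (x : EuclideanSpace ℝ (Fin n)) (r : ℝ), 0 < r →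
        σ (Metric.closedBall x r) ≤ ENNReal.ofReal (c * r ^ (n - 1))) →
      ∀ s : ℝ, 0 < s → ∀ x : EuclideanSpace ℝ (Fin n),
        (∫ y, Sn n s (x - y) ∂σ) ≤ C * s ^ (-(1 : ℝ) / 2) := by
  have hM := gaussianShellSum_pos (n - 1)
  refine ⟨c * (4 * π) ^ (-(n : ℝ) / 2) * gaussianShellSum (n - 1), by positivity, ?_⟩
  intro σ _ hσ s hs x
  have hSn (y : EuclideanSpace ℝ (Fin n)) :
      Sn n s (x - y) = (4 * π * s) ^ (-(n : ℝ) / 2) * exp (-dist y x ^ 2 / (4 * s)) := by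
    rw [Sn, if_pos hs, dist_eq_norm, norm_sub_rev]
  simp_rw [hSn, integral_const_mul]
  calc (4 * π * s) ^ (-(n : ℝ) / 2) * ∫ y, exp (-dist y x ^ 2 / (4 * s)) ∂σ
      ≤ (4 * π * s) ^ (-(n : ℝ) / 2) * (c * √s ^ (n - 1) * gaussianShellSum (n - 1)) := by
        gcongr
        exact integral_exp_neg_dist_sq_le hc.le hσ x hs
    _ = c * (4 * π) ^ (-(n : ℝ) / 2) * gaussianShellSum (n - 1) * s ^ (-(1 : ℝ) / 2) := by
        rw [mul_rpow (by positivity) hs.le,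
          ← rpow_neg_div_two_mul_sqrt_pow_pred (n := n) hs (by omega)]
        ring
end
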